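/- arXiv:2305.04347 — 2 statements merged into one kernel-verified Lean document; each statement's English description precedes it below -/
import Mathlib

section
/- For every real number t ∈ [0, 1/2], the lower bound C = 2B is achieved by the following channel with three output symbols: let the joint distribution on Bool × Fin 3 be given by μ(u, y), where P(U = u) = 1/2 for each u, P(Y = y₁ | U = 0) = 1 − 2t, P(Y = y₂ | U = 0) = 0, P(Y = y₃ | U = 0) = 2t, and P(Y = y₁ | U = 1) = 0, P(Y = y₂ | U = 1) = 1 − 2t, P(Y = y₃ | U = 1) = 2t (y₁, y₂, y₃ the three elements of Fin 3). Then B := Σ_{y : P(Y=y)>0} P(Y = y)·min(P(U=1|Y=y), P(U=0|Y=y)) = t and H(U | Y) = 2t. -/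
open Finset

attribute [local instance] Classical.propDecidable

/-- Binary entropy `H₂(p) = −p·log₂ p − (1−p)·log₂(1−p)`
(convention `0·log₂ 0 = 0` is automatic since `Real.logb 2 0 = 0`). -/
noncomputable def H2 (p : ℝ) : ℝ :=
  -p * Real.logb 2 p - (1 - p) * Real.logb 2 (1 - p)

/-- The three-output channel `P(Y = y | U = u)`:
for `u = 0`: `(1−2t, 0, 2t)`; for `u = 1`: `(0, 1−2t, 2t)`. -/
noncomputable def ch3 (t : ℝ) : Bool → Fin 3 → ℝ := fun u y =>
  if u = false then (if y = 0 then 1 - 2 * t else if y = 1 then 0 else 2 * t)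
  else (if y = 0 then 0 else if y = 1 then 1 - 2 * t else 2 * t)

/-- Joint pmf on `Bool × Fin 3` with uniform input: `μ(u,y) = (1/2)·P(Y = y | U = u)`. -/
noncomputable def ch3μ (t : ℝ) : Bool × Fin 3 → ℝ :=
  fun p => (1 / 2) * ch3 t p.1 p.2

/-- `P(Y = y)` for the joint distribution `ch3μ`. -/
noncomputable def ch3Py (t : ℝ) (y : Fin 3) : ℝ := ∑ u : Bool, ch3μ t (u, y)

/-- `P(U = 1 | Y = y) = P(U = 1 ∧ Y = y) / P(Y = y)` for the joint distribution `ch3μ`. -/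
noncomputable def ch3Cond (t : ℝ) (y : Fin 3) : ℝ := ch3μ t (true, y) / ch3Py t y

lemma H2_zero : H2 0 = 0 := by simp [H2]

lemma H2_one : H2 1 = 0 := by simp [H2]

lemma H2_half : H2 (1/2) = 1 := by
  have : Real.logb 2 (1/2 : ℝ) = -1 := by
    rw [one_div, Real.logb_inv, Real.logb_self_eq_one] ; norm_num
  rw [H2]; rw [show (1 : ℝ) - 1/2 = 1/2 by norm_num, this]; ring

/-- For `t ∈ [0,1/2]`, the three-output channel above with uniform input achieves
equality in the lower bound `C = 2B`: its MAP bit error rate is `t` and its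
conditional entropy `H(U|Y)` equals `2t`. -/
theorem three_output_channel_lower_bound_tight (t : ℝ) (h0 : 0 ≤ t) (h1 : t ≤ 1 / 2) :
    (∑ y ∈ Finset.univ.filter (fun y => 0 < ch3Py t y),
        ch3Py t y * min (ch3Cond t y) (1 - ch3Cond t y)) = t ∧
    (∑ y ∈ Finset.univ.filter (fun y => 0 < ch3Py t y),
        ch3Py t y * H2 (ch3Cond t y)) = 2 * t := by
  have hPy0 : ch3Py t 0 = (1 - 2*t)/2 := by
    simp [ch3Py, ch3μ, ch3]; ring
  have hPy1 : ch3Py t 1 = (1 - 2*t)/2 := by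
    simp [ch3Py, ch3μ, ch3]; ring
  have hPy2 : ch3Py t 2 = 2*t := by
    simp [ch3Py, ch3μ, ch3]
  have hnn : ∀ y, 0 ≤ ch3Py t y := by
    intro y; fin_cases y <;> simp [hPy0, hPy1, hPy2] <;> linarith
  have hC0 : ch3Cond t 0 = 0 := by simp [ch3Cond, ch3μ, ch3]
  have hterm : ∀ (y : Fin 3) (g : ℝ),
      (if 0 < ch3Py t y then ch3Py t y * g else 0) = ch3Py t y * g := by
    intro y g
    split_ifs with h
    · rfl
    · have : ch3Py t y = 0 := le_antisymm (not_lt.1 h) (hnn y)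
      rw [this]; ring
  have key : ∀ g : Fin 3 → ℝ,
      (∑ y ∈ Finset.univ.filter (fun y => 0 < ch3Py t y), ch3Py t y * g y)
      = ch3Py t 0 * g 0 + ch3Py t 1 * g 1 + ch3Py t 2 * g 2 := by
    intro g
    rw [Finset.sum_filter, Fin.sum_univ_three, hterm, hterm, hterm]
  rcases eq_or_lt_of_le h1 with ht2 | ht2
  · subst ht2
    have hC2 : ch3Cond (1/2) 2 = 1/2 := by
      rw [ch3Cond, hPy2]
      simp [ch3μ, ch3]
    constructor
    · rw [key, hPy0, hPy1, hPy2, hC2]; norm_num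
    · rw [key, hPy0, hPy1, hPy2, hC2, H2_half]; norm_num
  · have hz : (0:ℝ) < 1 - 2*t := by linarith
    have hC1 : ch3Cond t 1 = 1 := by
      rw [ch3Cond, hPy1]
      simp [ch3μ, ch3]
      field_simp
    rcases eq_or_lt_of_le h0 with ht0 | ht0
    · subst ht0
      constructor
      · rw [key, hPy0, hPy1, hPy2, hC0, hC1]; norm_num
      · rw [key, hPy0, hPy1, hPy2, hC0, hC1, H2_zero, H2_one]; norm_num
    · have hC2 : ch3Cond t 2 = 1/2 := by
        rw [ch3Cond, hPy2]
        simp [ch3μ, ch3]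
        field_simp
      constructor
      · rw [key, hPy0, hPy1, hPy2, hC0, hC1, hC2]
        norm_num
        linarith
      · rw [key, hPy0, hPy1, hPy2, hC0, hC1, hC2, H2_zero, H2_one, H2_half]
        ring
end

section
/- There exists a channel from Fin 4 to Fin 4, i.e. a matrix p : Fin 4 → Fin 4 → ℝ with p(i,j) ≥ 0 and Σ_i p(i,j) = 1 for every j, such that no injective encoder f : Bool → Fin 4 simultaneously minimizes the MAP bit error rate B(f) and the conditional entropy C(f) over all injective encoders: every injective f minimizing C(f) fails to minimize B(f). -/
/-
For the channel with columns `(4,0,4,1)/9`, `(4,0,2,3)/9`, `(2,2,2,3)/9`, `(4,1,4,0)/9`, the sums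
`∑ᵢ min(p(i,a), p(i,b))` show that the only encoders of minimal error rate `5/18` use the input
pairs `{0,2}` and `{2,3}`. Since `H(U|Y) = H(U,Y) - H(Y)`, the conditional entropy is a sum over
outputs of `negMulLog x + negMulLog y - negMulLog (x + y)` in the two column entries, so
`18 · log 2 · C` is `9 log 3` and `15 log 3 - 10 log 2` for those pairs, but `6 log 3 + 4 log 2` for
the pair `{1,3}`. Both gaps are positive because `2^14 < 3^9`, so no minimizer of `C` minimizes `B`.
-/

open Finset

attribute [local instance] Classical.propDecidable

/-- Joint pmf on `Bool × Fin 4` for channel `p` (column-stochastic,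
`p i j = P(Y = i | X = j)`), encoder `f`, and uniform input bit:
`μ(u,i) = (1/2)·p i (f u)`. -/
noncomputable def chμ (p : Fin 4 → Fin 4 → ℝ) (f : Bool → Fin 4) (u : Bool) (i : Fin 4) : ℝ :=
  (1 / 2) * p i (f u)

/-- `P(Y = i)` for the joint distribution `chμ`. -/
noncomputable def chPy (p : Fin 4 → Fin 4 → ℝ) (f : Bool → Fin 4) (i : Fin 4) : ℝ :=
  chμ p f false i + chμ p f true i

/-- MAP bit error rate of encoder `f`:
`B(f) = (1/2)·Σᵢ min(p(i, f(1)), p(i, f(0)))`. -/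
noncomputable def chB (p : Fin 4 → Fin 4 → ℝ) (f : Bool → Fin 4) : ℝ :=
  (1 / 2) * ∑ i : Fin 4, min (p i (f true)) (p i (f false))

/-- Conditional entropy of encoder `f`:
`C(f) = H(U|Y) = Σ_{i : P(Y=i)>0} P(Y=i)·H₂(μ(1,i)/(μ(0,i)+μ(1,i)))`. -/
noncomputable def chC (p : Fin 4 → Fin 4 → ℝ) (f : Bool → Fin 4) : ℝ :=
  ∑ i ∈ Finset.univ.filter (fun i => 0 < chPy p f i),
    chPy p f i * H2 (chμ p f true i / chPy p f i)

open Real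

noncomputable def splitEntropy (x y : ℝ) : ℝ :=
  negMulLog x + negMulLog y - negMulLog (x + y)

lemma splitEntropy_mul (c x y : ℝ) : splitEntropy (c * x) (c * y) = c * splitEntropy x y := by
  simp only [splitEntropy, ← mul_add, negMulLog_mul]
  ring

lemma mul_binEntropy_div_add (x y : ℝ) :
    (x + y) * binEntropy (x / (x + y)) = splitEntropy x y := by
  by_cases hs : x + y = 0
  · obtain rfl : y = -x := by linarith
    simp [splitEntropy, negMulLog, log_neg_eq_log]
  have hmul (z : ℝ) :
      (x + y) * negMulLog (z / (x + y)) = negMulLog z - z / (x + y) * negMulLog (x + y) := by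
    have := negMulLog_mul (x + y) (z / (x + y))
    rw [mul_div_cancel₀ z hs] at this
    linarith
  rw [binEntropy_eq_negMulLog_add_negMulLog_one_sub, one_sub_div hs, add_sub_cancel_left, mul_add,
    hmul, hmul, splitEntropy]
  field_simp
  ring

lemma H2_eq_binEntropy_div (x : ℝ) : H2 x = binEntropy x / log 2 := by
  simp only [H2, binEntropy, logb, log_inv]
  ring

lemma chC_eq_sum (p : Fin 4 → Fin 4 → ℝ) (hp : ∀ i j, 0 ≤ p i j) (f : Bool → Fin 4) :
    chC p f = ∑ i, chPy p f i * H2 (chμ p f true i / chPy p f i) := by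
  refine Finset.sum_filter_of_ne fun i _ hne => (lt_of_le_of_ne ?_ ?_)
  · have := hp i (f false); have := hp i (f true)
    simp only [chPy, chμ]; positivity
  · rintro h; simp [← h] at hne

lemma chC_mul_log_two (p : Fin 4 → Fin 4 → ℝ) (hp : ∀ i j, 0 ≤ p i j) (f : Bool → Fin 4) :
    chC p f * log 2 = (∑ i, splitEntropy (p i (f true)) (p i (f false))) / 2 := by
  have hlog : log 2 ≠ 0 := (log_pos one_lt_two).ne'
  rw [chC_eq_sum p hp, Finset.sum_mul, Finset.sum_div]
  refine Finset.sum_congr rfl fun i _ => ?_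
  rw [H2_eq_binEntropy_div, chPy, add_comm, mul_div_assoc', div_mul_cancel₀ _ hlog,
    mul_binEntropy_div_add, chμ, chμ, splitEntropy_mul]
  ring

lemma chC_natCast_div (N : Fin 4 → Fin 4 → ℕ) {d : ℝ} (hd : 0 < d) (f : Bool → Fin 4) :
    chC (fun i j => N i j / d) f * (2 * d * log 2) =
      ∑ i, splitEntropy (N i (f true)) (N i (f false)) := by
  have h := chC_mul_log_two (fun i j => (N i j : ℝ) / d) (fun i j => by positivity) f
  simp only [div_eq_inv_mul, splitEntropy_mul, ← Finset.mul_sum] at h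
  field_simp at h ⊢
  linear_combination h

lemma chB_natCast_div (N : Fin 4 → Fin 4 → ℕ) {d : ℝ} (hd : 0 < d) (f : Bool → Fin 4) :
    chB (fun i j => N i j / d) f = (∑ i, min (N i (f true)) (N i (f false)) : ℕ) / (2 * d) := by
  simp only [chB, min_div_div_right hd.le, ← Finset.sum_div]
  push_cast
  ring

def nineChannel : Fin 4 → Fin 4 → ℕ :=
  ![![4, 4, 2, 4], ![0, 0, 2, 1], ![4, 2, 2, 4], ![1, 3, 3, 0]]

noncomputable def channel : Fin 4 → Fin 4 → ℝ := fun i j => nineChannel i j / 9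

lemma sum_channel_eq_one (j : Fin 4) : ∑ i, channel i j = 1 := by
  have h : ∑ i, nineChannel i j = 9 := by revert j; decide
  simp only [channel, ← Finset.sum_div]
  rw [div_eq_one_iff_eq (by norm_num)]
  exact_mod_cast h

lemma eq_of_sum_min_nineChannel_le_five {a b : Fin 4}
    (h : ∑ i, min (nineChannel i a) (nineChannel i b) ≤ 5) :
    (a, b) = (0, 2) ∨ (a, b) = (2, 0) ∨ (a, b) = (2, 3) ∨ (a, b) = (3, 2) := by
  revert a b; decide

lemma fourteen_mul_log_two_lt : 14 * log 2 < 9 * log 3 := by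
  have h : log ((2 : ℝ) ^ 14) < log ((3 : ℝ) ^ 9) := log_lt_log (by norm_num) (by norm_num)
  simpa only [log_pow, Nat.cast_ofNat] using h

lemma chC_channel_lt {f : Bool → Fin 4}
    (hf : (f true, f false) = (0, 2) ∨ (f true, f false) = (2, 0) ∨
      (f true, f false) = (2, 3) ∨ (f true, f false) = (3, 2)) :
    chC channel (fun u => bif u then 1 else 3) < chC channel f := by
  have hpos : 0 < 2 * 9 * log 2 := by positivity
  unfold channel
  rw [← mul_lt_mul_iff_left₀ hpos, chC_natCast_div _ (by norm_num),
    chC_natCast_div _ (by norm_num)]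
  have h4 : log 4 = 2 * log 2 := by
    rw [show (4 : ℝ) = 2 ^ 2 by norm_num, log_pow]; norm_num
  have h6 : log 6 = log 2 + log 3 := by
    rw [show (6 : ℝ) = 2 * 3 by norm_num, log_mul] <;> norm_num
  have h8 : log 8 = 3 * log 2 := by
    rw [show (8 : ℝ) = 2 ^ 3 by norm_num, log_pow]; norm_num
  have := fourteen_mul_log_two_lt
  have := log_pos one_lt_two
  simp only [Prod.mk.injEq] at hf
  rcases hf with ⟨h1, h2⟩ | ⟨h1, h2⟩ | ⟨h1, h2⟩ | ⟨h1, h2⟩ <;>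
  · simp only [h1, h2, cond_true, cond_false, Fin.sum_univ_four, nineChannel, Matrix.cons_val]
    norm_num [splitEntropy, negMulLog, h4, h6, h8]
    linarith

lemma sum_min_nineChannel_le_five_of_chB_le {f : Bool → Fin 4}
    (h : chB channel f ≤ chB channel (fun u => bif u then 0 else 2)) :
    ∑ i, min (nineChannel i (f true)) (nineChannel i (f false)) ≤ 5 := by
  unfold channel at h
  rw [chB_natCast_div _ (by norm_num), chB_natCast_div _ (by norm_num),
    div_le_div_iff_of_pos_right (by norm_num), Nat.cast_le] at h
  exact h.trans_eq (by decide)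

/-- There is a channel from `Fin 4` to `Fin 4` for which no injective encoder
minimizes both the conditional entropy and the MAP bit error rate:
every injective minimizer of `C` fails to minimize `B`. -/
theorem exists_channel_entropy_ber_minimizers_differ :
    ∃ p : Fin 4 → Fin 4 → ℝ,
      (∀ i j, 0 ≤ p i j) ∧ (∀ j, ∑ i : Fin 4, p i j = 1) ∧
      ∀ f : Bool → Fin 4, Function.Injective f →
        (∀ f' : Bool → Fin 4, Function.Injective f' → chC p f ≤ chC p f') →
        ¬ (∀ f' : Bool → Fin 4, Function.Injective f' → chB p f ≤ chB p f') := by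
  refine ⟨channel, fun i j => by unfold channel; positivity, sum_channel_eq_one,
    fun f _ hCmin hBmin => ?_⟩
  have hB := sum_min_nineChannel_le_five_of_chB_le (hBmin _ (by decide))
  have hC := hCmin (fun u => bif u then 1 else 3) (by decide)
  exact (chC_channel_lt (eq_of_sum_min_nineChannel_le_five hB)).not_ge hC
end
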